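/- Let K be a convex body in R^n with 0 in its interior and q ∈ R. Then the 0-th dual curvature measure satisfies C̃_0(K,η) = (1/n) H^{n-1}(α_{K^*}(η)) for every Borel η ⊂ S^{n-1}; i.e., C̃_0(K,·) equals (1/n) times Aleksandrov's integral curvature of the polar body K^*. -/

import Mathlib

open Set MeasureTheory Metric Filter
open scoped RealInnerProductSpace Pointwise Topology

noncomputable section

/-- Euclidean `n`-space. -/
abbrev Vn (n : ℕ) := EuclideanSpace ℝ (Fin n)

/-- The support function `h_K(x) = max {⟪y, x⟫ : y ∈ K}` of a compact convex set. -/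
def suppFn {n : ℕ} (K : Set (Vn n)) (x : Vn n) : ℝ :=
  sSup ((fun y => ⟪y, x⟫) '' K)

/-- The radial function `ρ_K(x) = max {r ≥ 0 : r • x ∈ K}`. -/
def radFn {n : ℕ} (K : Set (Vn n)) (x : Vn n) : ℝ :=
  sSup {r : ℝ | 0 ≤ r ∧ r • x ∈ K}

/-- The polar body `K^* = {x : ⟪x, y⟫ ≤ 1 for all y ∈ K}`. -/
def polarBody {n : ℕ} (K : Set (Vn n)) : Set (Vn n) :=
  {x | ∀ y ∈ K, ⟪x, y⟫ ≤ 1}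

/-- The radial Gauss image: `α_K(ω) = {v ∈ S^{n-1} : ρ_K(u)u ∈ H_K(v) for some u ∈ ω}`. -/
def radGaussImage {n : ℕ} (K : Set (Vn n)) (ω : Set (Vn n)) : Set (Vn n) :=
  {v ∈ sphere (0 : Vn n) 1 | ∃ u ∈ ω, ⟪radFn K u • u, v⟫ = suppFn K v}

/-- The reverse radial Gauss image:
`α*_K(η) = {u ∈ S^{n-1} : ρ_K(u)u ∈ H_K(v) for some v ∈ η}`. -/
def revRadGaussImage {n : ℕ} (K : Set (Vn n)) (η : Set (Vn n)) : Set (Vn n) :=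
  {u ∈ sphere (0 : Vn n) 1 | ∃ v ∈ η, ⟪radFn K u • u, v⟫ = suppFn K v}

/-!
On the unit sphere the radial function of a convex body with `0` in its interior is the reciprocal
of the support function of its polar, `ρ_K = 1 / h_{K^*}`, and by the bipolar theorem also
`ρ_{K^*} = 1 / h_K`. Hence `ρ_K(u) u ∈ H_K(v)` and `ρ_{K^*}(v) v ∈ H_{K^*}(u)` both say
`⟪u, v⟫ = h_{K^*}(u) h_K(v)`, so `α*_K(η) = α_{K^*}(η)`, and integrating `ρ_K^0 = 1` over it gives
its Hausdorff measure.
-/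

section

variable {n : ℕ} {K : Set (Vn n)}

lemma suppFn_bddAbove (hK : Bornology.IsBounded K) (x : Vn n) :
    BddAbove ((fun y => ⟪y, x⟫) '' K) := by
  obtain ⟨R, -, hR⟩ := hK.subset_closedBall_lt 0 0
  refine ⟨R * ‖x‖, ?_⟩
  rintro _ ⟨y, hy, rfl⟩
  calc ⟪y, x⟫ ≤ ‖y‖ * ‖x‖ := real_inner_le_norm y x
    _ ≤ R * ‖x‖ := by gcongr; simpa using hR hy

lemma le_suppFn (hK : Bornology.IsBounded K) {y : Vn n} (hy : y ∈ K) (x : Vn n) :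
    ⟪y, x⟫ ≤ suppFn K x :=
  le_csSup (suppFn_bddAbove hK x) ⟨y, hy, rfl⟩

lemma suppFn_smul {r : ℝ} (hr : 0 ≤ r) (x : Vn n) : suppFn K (r • x) = r * suppFn K x := by
  have himage : (fun y => ⟪y, r • x⟫) '' K = r • (fun y => ⟪y, x⟫) '' K := by
    rw [← Set.image_smul, Set.image_image]
    simp only [real_inner_smul_right, smul_eq_mul]
  rw [suppFn, himage, Real.sSup_smul_of_nonneg hr, smul_eq_mul, suppFn]

lemma mem_polarBody_iff_suppFn_le_one (hK : Bornology.IsBounded K) {x : Vn n} :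
    x ∈ polarBody K ↔ suppFn K x ≤ 1 := by
  constructor
  · intro hx
    refine Real.sSup_le ?_ zero_le_one
    rintro _ ⟨y, hy, rfl⟩
    show ⟪y, x⟫ ≤ 1
    rw [real_inner_comm]
    exact hx y hy
  · intro hx y hy
    rw [real_inner_comm]
    exact (le_suppFn hK hy x).trans hx

lemma mul_norm_le_suppFn (hK : Bornology.IsBounded K) {ε : ℝ} (hε : 0 ≤ ε)
    (hball : closedBall (0 : Vn n) ε ⊆ K) (x : Vn n) : ε * ‖x‖ ≤ suppFn K x := by
  rcases eq_or_ne x 0 with rfl | hx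
  · simpa using le_suppFn hK (hball (mem_closedBall_self hε)) 0
  have hxn : 0 < ‖x‖ := norm_pos_iff.mpr hx
  have hmem : (ε / ‖x‖) • x ∈ K := by
    apply hball
    rw [mem_closedBall_zero_iff, norm_smul, Real.norm_of_nonneg (by positivity),
      div_mul_cancel₀ _ hxn.ne']
  have hinner : ⟪(ε / ‖x‖) • x, x⟫ = ε * ‖x‖ := by
    rw [real_inner_smul_left, real_inner_self_eq_norm_sq]
    field_simp
  exact hinner ▸ le_suppFn hK hmem x

lemma exists_closedBall_subset_of_zero_mem_interior (h0 : (0 : Vn n) ∈ interior K) :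
    ∃ ε > 0, closedBall (0 : Vn n) ε ⊆ K :=
  Metric.nhds_basis_closedBall.mem_iff.mp (mem_interior_iff_mem_nhds.mp h0)

lemma suppFn_pos (hK : Bornology.IsBounded K) (h0 : (0 : Vn n) ∈ interior K) {x : Vn n}
    (hx : x ≠ 0) : 0 < suppFn K x := by
  obtain ⟨ε, hε, hball⟩ := exists_closedBall_subset_of_zero_mem_interior h0
  exact (mul_pos hε (norm_pos_iff.mpr hx)).trans_le (mul_norm_le_suppFn hK hε.le hball x)

lemma radFn_polarBody (hK : Bornology.IsBounded K) (h0 : (0 : Vn n) ∈ interior K) {x : Vn n}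
    (hx : x ≠ 0) : radFn (polarBody K) x = (suppFn K x)⁻¹ := by
  have hpos := suppFn_pos hK h0 hx
  have hset : {r : ℝ | 0 ≤ r ∧ r • x ∈ polarBody K} = Icc 0 (suppFn K x)⁻¹ := by
    ext r
    refine and_congr_right fun hr => ?_
    rw [mem_polarBody_iff_suppFn_le_one hK, suppFn_smul hr, ← one_div, le_div_iff₀ hpos]
  rw [radFn, hset, csSup_Icc (inv_nonneg.mpr hpos.le)]

lemma polarBody_anti {L : Set (Vn n)} (hKL : K ⊆ L) : polarBody L ⊆ polarBody K :=
  fun _ hx y hy => hx y (hKL hy)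

lemma polarBody_isBounded (h0 : (0 : Vn n) ∈ interior K) :
    Bornology.IsBounded (polarBody K) := by
  obtain ⟨ε, hε, hball⟩ := exists_closedBall_subset_of_zero_mem_interior h0
  refine isBounded_iff_forall_norm_le.mpr ⟨ε⁻¹, fun z hz => ?_⟩
  have hz' := (mem_polarBody_iff_suppFn_le_one isBounded_closedBall).mp (polarBody_anti hball hz)
  rw [← one_div, le_div_iff₀ hε, mul_comm]
  exact (mul_norm_le_suppFn isBounded_closedBall hε.le subset_rfl z).trans hz'

lemma zero_mem_interior_polarBody (hK : Bornology.IsBounded K) :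
    (0 : Vn n) ∈ interior (polarBody K) := by
  obtain ⟨R, hR, hKR⟩ := hK.subset_closedBall_lt 0 0
  refine mem_interior_iff_mem_nhds.mpr (mem_of_superset (ball_mem_nhds 0 (inv_pos.mpr hR)) ?_)
  intro z hz y hy
  rw [mem_ball_zero_iff] at hz
  have hy' : ‖y‖ ≤ R := by simpa using hKR hy
  calc ⟪z, y⟫ ≤ ‖z‖ * ‖y‖ := real_inner_le_norm z y
    _ ≤ R⁻¹ * R := by gcongr
    _ = 1 := inv_mul_cancel₀ hR.ne'

lemma polarBody_polarBody (hcl : IsClosed K) (hconv : Convex ℝ K) (h0 : (0 : Vn n) ∈ K) :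
    polarBody (polarBody K) = K := by
  refine Subset.antisymm (fun x hx => ?_) fun x hx z hz => real_inner_comm x z ▸ hz x hx
  by_contra hxK
  obtain ⟨f, c, hfK, hfx⟩ := geometric_hahn_banach_closed_point hconv hcl hxK
  have hc : 0 < c := by simpa using hfK 0 h0
  set w := (InnerProductSpace.toDual ℝ (Vn n)).symm f
  have hw : ∀ v, ⟪w, v⟫ = f v := fun v => InnerProductSpace.toDual_symm_apply
  have hmem : c⁻¹ • w ∈ polarBody K := fun y hy => by
    rw [real_inner_smul_left, hw, inv_mul_le_one₀ hc]
    exact (hfK y hy).le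
  have hx' := hx _ hmem
  rw [real_inner_smul_right, real_inner_comm, hw, inv_mul_le_one₀ hc] at hx'
  exact hx'.not_gt hfx

lemma radFn_eq_inv_suppFn_polarBody (hK : IsCompact K) (hconv : Convex ℝ K)
    (h0 : (0 : Vn n) ∈ interior K) {x : Vn n} (hx : x ≠ 0) :
    radFn K x = (suppFn (polarBody K) x)⁻¹ := by
  conv_lhs => rw [← polarBody_polarBody hK.isClosed hconv (interior_subset h0)]
  exact radFn_polarBody (polarBody_isBounded h0) (zero_mem_interior_polarBody hK.isBounded) hx

lemma revRadGaussImage_eq_radGaussImage_polarBody (hK : IsCompact K) (hconv : Convex ℝ K)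
    (h0 : (0 : Vn n) ∈ interior K) {η : Set (Vn n)} (hη : η ⊆ sphere (0 : Vn n) 1) :
    revRadGaussImage K η = radGaussImage (polarBody K) η := by
  ext u
  simp only [revRadGaussImage, radGaussImage, mem_sep_iff]
  refine and_congr_right fun hu => exists_congr fun v => and_congr_right fun hv => ?_
  have hu0 : u ≠ 0 := ne_zero_of_mem_sphere one_ne_zero ⟨u, hu⟩
  have hv0 : v ≠ 0 := ne_zero_of_mem_sphere one_ne_zero ⟨v, hη hv⟩
  rw [real_inner_smul_left, real_inner_smul_left, real_inner_comm v u,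
    radFn_eq_inv_suppFn_polarBody hK hconv h0 hu0, radFn_polarBody hK.isBounded h0 hv0,
    inv_mul_eq_iff_eq_mul₀ (suppFn_pos (polarBody_isBounded h0)
      (zero_mem_interior_polarBody hK.isBounded) hu0).ne',
    inv_mul_eq_iff_eq_mul₀ (suppFn_pos hK.isBounded h0 hv0).ne', mul_comm (suppFn K v)]

end

theorem stmt17_general {n : ℕ} (K : Set (Vn n)) (hKcpt : IsCompact K)
    (hKconv : Convex ℝ K) (h0 : (0 : Vn n) ∈ interior K) :
    ∀ η : Set (Vn n), MeasurableSet η → η ⊆ sphere (0 : Vn n) 1 →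
      (1 / (n : ℝ)) *
          ∫ u in revRadGaussImage K η, (radFn K u) ^ (0 : ℝ) ∂ μH[(n : ℝ) - 1] =
        (1 / (n : ℝ)) * (μH[(n : ℝ) - 1] (radGaussImage (polarBody K) η)).toReal := by
  intro η _ hη
  rw [revRadGaussImage_eq_radGaussImage_polarBody hKcpt hKconv h0 hη]
  simp only [Real.rpow_zero, setIntegral_const, smul_eq_mul, mul_one, measureReal_def]

/-- For a convex body `K` with `0` in its interior, the `0`-th dual curvature measure satisfies
`C̃_0(K,η) = (1/n) H^{n-1}(α_{K^*}(η))` for every Borel `η ⊆ S^{n-1}`; i.e. `C̃_0(K,·)` is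
`(1/n)` times Aleksandrov's integral curvature of the polar body `K^*`. -/
theorem stmt17 {n : ℕ} (hn : 0 < n) (K : Set (Vn n)) (hKcpt : IsCompact K)
    (hKconv : Convex ℝ K) (h0 : (0 : Vn n) ∈ interior K) :
    ∀ η : Set (Vn n), MeasurableSet η → η ⊆ sphere (0 : Vn n) 1 →
      (1 / (n : ℝ)) *
          ∫ u in revRadGaussImage K η, (radFn K u) ^ (0 : ℝ) ∂ μH[(n : ℝ) - 1] =
        (1 / (n : ℝ)) * (μH[(n : ℝ) - 1] (radGaussImage (polarBody K) η)).toReal :=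
  stmt17_general K hKcpt hKconv h0
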